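/- arXiv:1802.08170 — 2 statements merged into one kernel-verified Lean document; each statement's English description precedes it below -/
import Mathlib

section
/- For a distributive complete lattice L, the weak upper space Υ L (with topology generated by complements of principal ideals) is a web space if and only if L is a frame. -/
/-!
Open sets of the weak upper topology are upper sets and its specialization order is the order
of `L`. If `x ⊓ ·` preserves all joins it has an upper adjoint and is therefore continuous, so
`(x ⊓ ·)⁻¹' U` is an open web around `x` inside `U`. Conversely, if `x ⊓ sSup Y` is not below
`s = ⨆ y ∈ Y, x ⊓ y`, take a web `W` around it inside `{z | ¬ z ≤ s}`. Since the basic open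
sets are complements of finitely generated lower sets, some finite join `y'` of elements of `Y`
lies in the interior of `W`, and a common lower bound of `x ⊓ sSup Y` and `y'` in `W` lies
below `x ⊓ y' ≤ s` by finite distributivity: a contradiction.
-/

/-- The weak upper topology of a (quasi-)ordered set: generated by the
complements of principal ideals. -/
def upTop (L : Type*) [LE L] : TopologicalSpace L :=
  TopologicalSpace.generateFrom {U : Set L | ∃ y : L, U = {x | ¬ x ≤ y}}

open Topology

lemma upTop_eq_upper (L : Type*) [Preorder L] : upTop L = upper L := by
  refine congrArg TopologicalSpace.generateFrom (Set.ext fun U => ?_)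
  simp only [Set.mem_ofPred_eq, eq_comm (a := U)]
  rfl

lemma isUpper_upTop (L : Type*) [Preorder L] : @IsUpper L (upTop L) _ :=
  @IsUpper.mk L (upTop L) _ (upTop_eq_upper L)

section Web

variable {X : Type*} [TopologicalSpace X]

/-- In Mathlib's convention `x ⤳ w` says that `w` lies below `x` in the specialization order
(for the upper topology: `w ≤ x`). -/
def IsWebAround (x : X) (W : Set X) : Prop :=
  x ∈ W ∧ ∀ y ∈ W, ∃ w ∈ W, x ⤳ w ∧ y ⤳ w

variable (X) in
def IsWebSpace : Prop :=
  ∀ (x : X) (U : Set X), IsOpen U → x ∈ U → ∃ W ∈ 𝓝 x, W ⊆ U ∧ IsWebAround x W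

theorem isWebSpace_iff : IsWebSpace X ↔ ∀ (x : X) (U : Set X), IsOpen U → x ∈ U →
    ∃ W V : Set X, IsOpen V ∧ x ∈ V ∧ V ⊆ W ∧ W ⊆ U ∧ x ∈ W ∧
      ∀ y ∈ W, ∃ w ∈ W,
        (∀ O : Set X, IsOpen O → w ∈ O → x ∈ O) ∧ (∀ O : Set X, IsOpen O → w ∈ O → y ∈ O) := by
  simp only [IsWebSpace, IsWebAround, mem_nhds_iff, ← specializes_iff_forall_open]
  refine forall₄_congr fun x U _ _ => ⟨?_, ?_⟩
  · rintro ⟨W, ⟨V, hVW, hV, hxV⟩, hWU, hweb⟩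
    exact ⟨W, V, hV, hxV, hVW, hWU, hweb⟩
  · rintro ⟨W, V, hV, hxV, hVW, hWU, hweb⟩
    exact ⟨W, ⟨V, hVW, hV, hxV⟩, hWU, hweb⟩

end Web

lemma inf_finset_sup_of_distrib {L ι : Type*} [Lattice L] [OrderBot L]
    (hdist : ∀ a b c : L, a ⊓ (b ⊔ c) = (a ⊓ b) ⊔ (a ⊓ c)) (x : L) (t : Finset ι) (f : ι → L) :
    x ⊓ t.sup f = t.sup fun i => x ⊓ f i := by
  induction t using Finset.cons_induction with
  | empty => simp
  | cons i t _ ih => rw [Finset.sup_cons, Finset.sup_cons, hdist, ih]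

lemma galoisConnection_inf_left_of_inf_sSup {L : Type*} [CompleteLattice L] {x : L}
    (hx : ∀ Y : Set L, x ⊓ sSup Y = ⨆ y ∈ Y, x ⊓ y) :
    GaloisConnection (x ⊓ ·) fun b => sSup {u | x ⊓ u ≤ b} := fun a b =>
  ⟨fun h => le_sSup h, fun h => calc
    x ⊓ a ≤ x ⊓ sSup {u | x ⊓ u ≤ b} := inf_le_inf_left x h
    _ = ⨆ u ∈ {u | x ⊓ u ≤ b}, x ⊓ u := hx _
    _ ≤ b := iSup₂_le fun _ hu => hu⟩

namespace Topology.IsUpper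

section Preorder

variable {α : Type*} [Preorder α] [TopologicalSpace α] [IsUpper α]

theorem specializes_iff_le {a b : α} : a ⤳ b ↔ b ≤ a := by
  rw [specializes_iff_mem_closure, closure_singleton, Set.mem_Iic]

theorem _root_.GaloisConnection.continuous_of_isUpper {β : Type*} [Preorder β]
    [TopologicalSpace β] [IsUpper β] {f : α → β} {g : β → α} (gc : GaloisConnection f g) :
    Continuous f := by
  refine continuous_iff_Iic.2 fun b => ?_
  rw [show f ⁻¹' Set.Iic b = Set.Iic (g b) from Set.ext fun a => gc a b]
  exact isClosed_Iic

end Preorder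

variable {L : Type*} [CompleteLattice L] [TopologicalSpace L] [IsUpper L]

theorem exists_finset_sup_mem_of_sSup_mem {U : Set L} (hU : IsOpen U) {Y : Set L}
    (hY : sSup Y ∈ U) : ∃ t : Finset L, ↑t ⊆ Y ∧ t.sup id ∈ U := by
  classical
  obtain ⟨_, ⟨s, hs, rfl⟩, hYs, hsU⟩ := IsUpper.isTopologicalBasis.exists_subset_of_mem_open hY hU
  have : ∀ b ∈ s, ∃ y ∈ Y, ¬ y ≤ b := fun b hb => by
    by_contra! h
    exact hYs (mem_lowerClosure.2 ⟨b, hb, sSup_le h⟩)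
  choose! f hfY hfb using this
  refine ⟨hs.toFinset.image f, by simpa [Set.subset_def] using hfY, hsU ?_⟩
  rintro ⟨b, hb, hle⟩
  exact hfb b hb (le_trans (Finset.le_sup (f := id) (by simpa using ⟨b, hb, rfl⟩)) hle)

end Topology.IsUpper

section WebSpaceOfUpper

open Topology.IsUpper

variable {L : Type*} [CompleteLattice L] [TopologicalSpace L] [IsUpper L]

theorem isWebSpace_of_inf_sSup_eq (hframe : ∀ (x : L) (Y : Set L), x ⊓ sSup Y = ⨆ y ∈ Y, x ⊓ y) :
    IsWebSpace L := by
  intro x U hU hxU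
  have hcont : Continuous (x ⊓ ·) :=
    (galoisConnection_inf_left_of_inf_sSup (hframe x)).continuous_of_isUpper
  have hUup := isUpperSet_of_isOpen hU
  refine ⟨(x ⊓ ·) ⁻¹' U, (hU.preimage hcont).mem_nhds (by simpa), fun z hz => hUup inf_le_right hz,
    by simpa, fun y hy => ⟨x ⊓ y, by simpa [← inf_assoc] using hy, ?_, ?_⟩⟩
  · exact specializes_iff_le.2 inf_le_left
  · exact specializes_iff_le.2 inf_le_right

theorem IsWebSpace.inf_sSup_eq (hdist : ∀ a b c : L, a ⊓ (b ⊔ c) = (a ⊓ b) ⊔ (a ⊓ c))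
    (hweb : IsWebSpace L) (x : L) (Y : Set L) : x ⊓ sSup Y = ⨆ y ∈ Y, x ⊓ y := by
  refine le_antisymm ?_ (iSup₂_le fun y hy => inf_le_inf_left x (le_sSup hy))
  by_contra hlt
  obtain ⟨W, hW, hWU, -, hWweb⟩ := hweb _ _ isClosed_Iic.isOpen_compl hlt
  obtain ⟨V, hVW, hV, hxV⟩ := mem_nhds_iff.1 hW
  obtain ⟨t, htY, htV⟩ :=
    exists_finset_sup_mem_of_sSup_mem hV (isUpperSet_of_isOpen hV inf_le_right hxV)
  obtain ⟨w, hwW, hwx, hwt⟩ := hWweb _ (hVW htV)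
  refine hWU hwW ?_
  calc w ≤ x ⊓ t.sup id :=
        le_inf ((specializes_iff_le.1 hwx).trans inf_le_left) (specializes_iff_le.1 hwt)
    _ = t.sup (x ⊓ ·) := inf_finset_sup_of_distrib hdist x t id
    _ ≤ ⨆ y ∈ Y, x ⊓ y := Finset.sup_le fun y hy => le_iSup₂_of_le y (htY hy) le_rfl

end WebSpaceOfUpper

/-- For a distributive complete lattice L, the weak upper space
Υ L is a web space iff L is a frame. -/
theorem stmt_7 {L : Type*} [CompleteLattice L]
    (hdist : ∀ a b c : L, a ⊓ (b ⊔ c) = (a ⊓ b) ⊔ (a ⊓ c)) :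
    (∀ (x : L) (U : Set L), (upTop L).IsOpen U → x ∈ U →
      ∃ W V : Set L, (upTop L).IsOpen V ∧ x ∈ V ∧ V ⊆ W ∧ W ⊆ U ∧ x ∈ W ∧
        ∀ y ∈ W, ∃ w ∈ W,
          (∀ O : Set L, (upTop L).IsOpen O → w ∈ O → x ∈ O) ∧
          (∀ O : Set L, (upTop L).IsOpen O → w ∈ O → y ∈ O)) ↔
    (∀ (x : L) (Y : Set L), x ⊓ sSup Y = ⨆ y ∈ Y, x ⊓ y) := by
  let := upTop L
  have := isUpper_upTop L
  exact isWebSpace_iff.symm.trans ⟨IsWebSpace.inf_sSup_eq hdist, isWebSpace_of_inf_sSup_eq⟩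
end

section
/- Let (X, S) be a C-space with interior relation ρ defined by x ρ y iff y ∈ int(↑x). Then for every closed set A, the closure of ρA equals A, where ρA = {x : ∃ a ∈ A, x ρ a}; moreover ρA is the least lower set (with respect to the specialization order) whose closure is A. -/
/-- The specialization preorder: x ≤ y iff every open set containing x contains y. -/
def sle {X : Type*} [TopologicalSpace X] (x y : X) : Prop :=
  ∀ U : Set X, IsOpen U → x ∈ U → y ∈ U

/-- The core of a point. -/
def core {X : Type*} [TopologicalSpace X] (x : X) : Set X := {y | sle x y}

/-- The interior relation of a space: x ρ y iff y ∈ int(↑x). -/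
def rho {X : Type*} [TopologicalSpace X] (x y : X) : Prop := y ∈ interior (core x)

/-!
Every point `a` of a C-space has arbitrarily small neighbourhoods of the form `int ↑u`, and
then `u ρ a`; so each neighbourhood of a point of `A` meets `ρA`, giving `A ⊆ cl ρA`.
Conversely `x ρ a` forces `x ≤ a`, and closed sets are lower sets, so `ρA ⊆ A`.
Minimality: if `Y` is a lower set with `cl Y = A` and `x ρ a` with `a ∈ A`, the open
neighbourhood `int ↑x` of `a` meets `Y` in some `y ≥ x`, hence `x ∈ Y`.
-/

open Topology

section CSpace

variable {X : Type*} [TopologicalSpace X]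

def IsCSpace (X : Type*) [TopologicalSpace X] : Prop :=
  ∀ (x : X) (U : Set X), IsOpen U → x ∈ U → ∃ u : X, x ∈ interior (core u) ∧ core u ⊆ U

def IsSleLowerSet (Y : Set X) : Prop :=
  ∀ p ∈ Y, ∀ q, sle q p → q ∈ Y

def rhoImage (A : Set X) : Set X := {x | ∃ a ∈ A, rho x a}

theorem sle_iff_specializes {x y : X} : sle x y ↔ y ⤳ x :=
  specializes_iff_forall_open.symm

theorem sle_refl (x : X) : sle x x := fun _ _ hx => hx

theorem core_antitone {p q : X} (hqp : sle q p) : core p ⊆ core q :=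
  fun _ hz U hU hqU => hz U hU (hqp U hU hqU)

theorem sle_of_rho {x y : X} (h : rho x y) : sle x y := interior_subset h

theorem rho_of_sle_of_rho {p q a : X} (hqp : sle q p) (h : rho p a) : rho q a :=
  interior_mono (core_antitone hqp) h

theorem IsClosed.mem_of_sle {A : Set X} (hA : IsClosed A) {x a : X} (hxa : sle x a)
    (ha : a ∈ A) : x ∈ A :=
  (sle_iff_specializes.mp hxa).mem_closed hA ha

theorem rhoImage_subset_of_isClosed {A : Set X} (hA : IsClosed A) : rhoImage A ⊆ A :=
  fun _ ⟨_, ha, hxa⟩ => hA.mem_of_sle (sle_of_rho hxa) ha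

theorem subset_closure_rhoImage (hC : IsCSpace X) (A : Set X) : A ⊆ closure (rhoImage A) := by
  intro a ha
  rw [mem_closure_iff]
  intro U hU haU
  obtain ⟨u, hau, huU⟩ := hC a U hU haU
  exact ⟨u, huU (sle_refl u), a, ha, hau⟩

theorem closure_rhoImage (hC : IsCSpace X) {A : Set X} (hA : IsClosed A) :
    closure (rhoImage A) = A :=
  (closure_minimal (rhoImage_subset_of_isClosed hA) hA).antisymm (subset_closure_rhoImage hC A)

theorem isSleLowerSet_rhoImage (A : Set X) : IsSleLowerSet (rhoImage A) := by
  rintro p ⟨a, ha, hpa⟩ q hqp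
  exact ⟨a, ha, rho_of_sle_of_rho hqp hpa⟩

theorem rhoImage_subset_of_subset_closure {A Y : Set X} (hY : IsSleLowerSet Y)
    (hAY : A ⊆ closure Y) : rhoImage A ⊆ Y := by
  rintro x ⟨a, ha, hxa⟩
  obtain ⟨y, hy, hyY⟩ := mem_closure_iff.mp (hAY ha) _ isOpen_interior hxa
  exact hY y hyY x (interior_subset hy)

end CSpace

/-- In a C-space, for every closed set A, closure (ρA) = A, and
ρA is the least lower set with closure A. -/
theorem stmt_9 {X : Type*} [TopologicalSpace X]
    (hC : ∀ (x : X) (U : Set X), IsOpen U → x ∈ U →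
      ∃ u : X, x ∈ interior (core u) ∧ core u ⊆ U) :
    ∀ A : Set X, IsClosed A →
      closure {x | ∃ a ∈ A, rho x a} = A ∧
      (∀ p ∈ {x | ∃ a ∈ A, rho x a}, ∀ q, sle q p → q ∈ {x | ∃ a ∈ A, rho x a}) ∧
      (∀ Y : Set X, (∀ p ∈ Y, ∀ q, sle q p → q ∈ Y) → closure Y = A →
        {x | ∃ a ∈ A, rho x a} ⊆ Y) := by
  intro A hA
  exact ⟨closure_rhoImage hC hA, isSleLowerSet_rhoImage A,
    fun Y hY hYA => rhoImage_subset_of_subset_closure hY hYA.ge⟩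
end
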